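/- arXiv:1307.6708 — 5 statements merged into one kernel-verified Lean document; each statement's English description precedes it below -/
import Mathlib

section
/- Let G be a finite simple graph on vertex set {1,…,n} with no isolated vertices, and let c₀(G) denote the number of connected components of G that are bipartite. Then the dimension of the edge polytope P(G) equals n − c₀(G) − 1. -/
open Set

/-- The set of generating points `e i + e j` for the edges `{i, j}` of a graph `G`
on the vertex set `Fin n`. -/
def edgeVectors {n : ℕ} (G : SimpleGraph (Fin n)) : Set (Fin n → ℝ) :=
  {x | ∃ i j : Fin n, G.Adj i j ∧ x = Pi.single i 1 + Pi.single j 1}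

/-- The edge polytope of a graph `G` on the vertex set `Fin n`: the convex hull of
the points `e i + e j` over all edges `{i, j}` of `G`. -/
def edgePolytope {n : ℕ} (G : SimpleGraph (Fin n)) : Set (Fin n → ℝ) :=
  convexHull ℝ (edgeVectors G)

/-- The dimension of a polytope: the dimension of its affine hull. -/
noncomputable def polyDim {n : ℕ} (P : Set (Fin n → ℝ)) : ℕ :=
  Module.finrank ℝ (vectorSpan ℝ P)

/-- `c₀ G` is the number of connected components of `G` that are bipartite. -/
noncomputable def numBipartiteComponents {n : ℕ} (G : SimpleGraph (Fin n)) : ℕ :=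
  Nat.card {c : G.ConnectedComponent // (G.induce c.supp).Colorable 2}

/-!
The edge vectors all lie on the hyperplane `∑ xᵢ = 2`, which misses the origin, so the
dimension of `P(G)` is one less than the rank of the edge vectors. By duality, that rank is `n`
minus the dimension of the space of functions `f` with `f i + f j = 0` on every edge. Along a
walk such an `f` alternates in sign, so on a bipartite component it is a multiple of the `±1`
pattern of a 2-colouring, while on a non-bipartite component the sign of `f` would be a
2-colouring, forcing `f = 0`. Hence that space has dimension `c₀(G)`.
-/

open Module Submodule

theorem vectorSpan_convexHull {𝕜 E : Type*} [Ring 𝕜] [PartialOrder 𝕜] [AddCommGroup E]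
    [Module 𝕜 E] (s : Set E) : vectorSpan 𝕜 (convexHull 𝕜 s) = vectorSpan 𝕜 s := by
  rw [← direction_affineSpan, affineSpan_convexHull, direction_affineSpan]

section Hyperplane

variable {k V : Type*} [AddCommGroup V]

theorem span_eq_vectorSpan_sup_span_singleton [Ring k] [Module k V] {s : Set V} {x₀ : V} (hx₀ : x₀ ∈ s) :
    span k s = vectorSpan k s ⊔ k ∙ x₀ := by
  apply le_antisymm
  · rw [span_le]
    intro x hx
    rw [← sub_add_cancel x x₀]
    exact add_mem (mem_sup_left (vsub_mem_vectorSpan k hx hx₀))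
      (mem_sup_right (mem_span_singleton_self x₀))
  · refine sup_le ?_ ((span_singleton_le_iff_mem _ _).mpr (subset_span hx₀))
    rw [vectorSpan_def, span_le]
    rintro _ ⟨x, hx, y, hy, rfl⟩
    exact sub_mem (subset_span hx) (subset_span hy)

theorem finrank_vectorSpan_eq_finrank_span_sub_one [DivisionRing k] [Module k V]
    [FiniteDimensional k V] {s : Set V}
    (φ : V →ₗ[k] k) {c : k} (hc : c ≠ 0) (hφ : ∀ x ∈ s, φ x = c) :
    finrank k (vectorSpan k s) = finrank k (span k s) - 1 := by
  rcases s.eq_empty_or_nonempty with rfl | ⟨x₀, hx₀⟩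
  · rw [vectorSpan_empty, span_empty, finrank_bot]
  have hle : vectorSpan k s ≤ LinearMap.ker φ := by
    rw [vectorSpan_def, span_le]
    rintro _ ⟨x, hx, y, hy, rfl⟩
    simp [hφ x hx, hφ y hy]
  have hx₀' : x₀ ∉ vectorSpan k s := fun h => hc (by simpa [hφ x₀ hx₀] using hle h)
  rw [span_eq_vectorSpan_sup_span_singleton hx₀, finrank_sup_span_singleton hx₀',
    Nat.add_sub_cancel]

end Hyperplane

namespace SimpleGraph

variable {V : Type*} (G : SimpleGraph V)

/-- The kernel of the transposed signless incidence matrix of `G`. -/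
def edgeSumKernel : Submodule ℝ (V → ℝ) where
  carrier := {f | ∀ ⦃i j⦄, G.Adj i j → f i + f j = 0}
  add_mem' {f g} hf hg i j hij := by
    simp only [Pi.add_apply]
    linear_combination hf hij + hg hij
  zero_mem' _ _ _ := by simp
  smul_mem' a f hf i j hij := by
    simp only [Pi.smul_apply, smul_eq_mul, ← mul_add, hf hij, mul_zero]

abbrev BipartiteComponent : Type _ := {c : G.ConnectedComponent // (G.induce c.supp).Colorable 2}

open Classical in
noncomputable def componentSign (c : G.ConnectedComponent) (v : V) : ℝ :=
  if h : v ∈ c.supp ∧ (G.induce c.supp).Colorable 2 then (-1) ^ (h.2.some ⟨v, h.1⟩ : ℕ) else 0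

variable {G}

theorem mul_eq_mul_of_reachable {f g : V → ℝ} (hf : f ∈ G.edgeSumKernel)
    (hg : g ∈ G.edgeSumKernel) {u v : V} (huv : G.Reachable u v) : f v * g v = f u * g u := by
  obtain ⟨p⟩ := huv
  induction p with
  | nil => rfl
  | cons hadj _ ih =>
    rw [ih, eq_neg_of_add_eq_zero_right (hf hadj), eq_neg_of_add_eq_zero_right (hg hadj),
      neg_mul_neg]

theorem eq_zero_of_not_colorable {f : V → ℝ} (hf : f ∈ G.edgeSumKernel)
    {c : G.ConnectedComponent} (hc : ¬(G.induce c.supp).Colorable 2) {v : V} (hv : v ∈ c.supp) :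
    f v = 0 := by
  by_contra hfv
  refine hc ⟨Coloring.mk (fun w => if 0 < f w.1 then 0 else 1) ?_⟩
  rintro ⟨a, ha⟩ ⟨b, hb⟩ hab
  have hsum : f a + f b = 0 := hf hab
  have hfa : f a ≠ 0 := by
    have hsq := mul_eq_mul_of_reachable hf hf (ConnectedComponent.exact (hv.trans ha.symm))
    intro h
    simp [h, hfv] at hsq
  dsimp only
  split_ifs
  · linarith
  · decide
  · decide
  · exact (hfa (by linarith)).elim

theorem componentSign_of_mem {c : G.ConnectedComponent} {v : V} (hv : v ∈ c.supp)
    (hc : (G.induce c.supp).Colorable 2) :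
    G.componentSign c v = (-1) ^ (hc.some ⟨v, hv⟩ : ℕ) := by
  rw [componentSign, dif_pos ⟨hv, hc⟩]

theorem componentSign_mul_self {c : G.ConnectedComponent} {v : V} (hv : v ∈ c.supp)
    (hc : (G.induce c.supp).Colorable 2) : G.componentSign c v * G.componentSign c v = 1 := by
  rw [componentSign_of_mem hv hc, ← pow_add, ← two_mul, pow_mul, neg_one_sq, one_pow]

theorem componentSign_mem_edgeSumKernel (c : G.ConnectedComponent) :
    G.componentSign c ∈ G.edgeSumKernel := by
  intro i j hij
  have hj : i ∈ c.supp ↔ j ∈ c.supp := c.mem_supp_congr_adj hij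
  by_cases h : i ∈ c.supp ∧ (G.induce c.supp).Colorable 2
  · obtain ⟨hi, hc⟩ := h
    rw [componentSign_of_mem hi hc, componentSign_of_mem (hj.mp hi) hc]
    have hne := hc.some.valid (show (G.induce c.supp).Adj ⟨i, hi⟩ ⟨j, hj.mp hi⟩ from hij)
    generalize hc.some ⟨i, hi⟩ = a at hne
    generalize hc.some ⟨j, hj.mp hi⟩ = b at hne
    fin_cases a <;> fin_cases b <;> simp_all
  · rw [componentSign, dif_neg h, componentSign, dif_neg (by rwa [← hj]), add_zero]

open Classical in
variable (G) in
/-- `t ↦ ∑ c, t c • G.componentSign c`, written pointwise: at `v` only the component of `v`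
contributes. -/
noncomputable def componentSignCombination : (G.BipartiteComponent → ℝ) →ₗ[ℝ] (V → ℝ) where
  toFun t v := (if h : (G.induce (G.connectedComponentMk v).supp).Colorable 2 then
    t ⟨G.connectedComponentMk v, h⟩ else 0) * G.componentSign (G.connectedComponentMk v) v
  map_add' t s := by
    funext v
    by_cases h : (G.induce (G.connectedComponentMk v).supp).Colorable 2 <;> simp [h, add_mul]
  map_smul' a t := by
    funext v
    by_cases h : (G.induce (G.connectedComponentMk v).supp).Colorable 2 <;> simp [h, mul_assoc]

theorem componentSignCombination_apply (t : G.BipartiteComponent → ℝ) {v : V}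
    (hv : (G.induce (G.connectedComponentMk v).supp).Colorable 2) :
    G.componentSignCombination t v =
      t ⟨G.connectedComponentMk v, hv⟩ * G.componentSign (G.connectedComponentMk v) v := by
  simp [componentSignCombination, hv]

theorem componentSignCombination_injective :
    Function.Injective G.componentSignCombination := by
  rw [← LinearMap.ker_eq_bot, LinearMap.ker_eq_bot']
  rintro t ht
  funext ⟨c, hc⟩
  obtain ⟨v, rfl⟩ := c.exists_rep
  have hv := congrFun ht v
  rw [componentSignCombination_apply t hc, Pi.zero_apply] at hv
  have hsign := componentSign_mul_self (c := G.connectedComponentMk v) rfl hc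
  exact (mul_eq_zero.mp hv).resolve_right fun h => by simp [h] at hsign

theorem range_componentSignCombination :
    LinearMap.range G.componentSignCombination = G.edgeSumKernel := by
  refine le_antisymm ?_ fun f hf => ?_
  · rintro _ ⟨t, rfl⟩ i j hij
    have hc := ConnectedComponent.connectedComponentMk_eq_of_adj hij
    have hσ := componentSign_mem_edgeSumKernel (G.connectedComponentMk i) hij
    by_cases h : (G.induce (G.connectedComponentMk i).supp).Colorable 2
    · rw [componentSignCombination_apply t h, componentSignCombination_apply t (hc ▸ h)]
      simp only [← hc, ← mul_add, hσ, mul_zero]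
    · have h' : ¬(G.induce (G.connectedComponentMk j).supp).Colorable 2 := hc ▸ h
      simp [componentSignCombination, h, h']
  refine ⟨fun c => f c.1.out * G.componentSign c.1 c.1.out, funext fun v => ?_⟩
  set c := G.connectedComponentMk v
  by_cases hc : (G.induce c.supp).Colorable 2
  · have hrv : G.Reachable c.out v := ConnectedComponent.exact c.out_eq
    rw [componentSignCombination_apply _ hc, ← mul_eq_mul_of_reachable hf
      (componentSign_mem_edgeSumKernel c) hrv, mul_assoc, componentSign_mul_self rfl hc, mul_one]
  · simp [componentSignCombination, c, hc, eq_zero_of_not_colorable hf hc rfl]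

theorem finrank_edgeSumKernel [Finite V] :
    finrank ℝ G.edgeSumKernel = Nat.card G.BipartiteComponent := by
  have : Fintype G.BipartiteComponent := Fintype.ofFinite _
  let e := (LinearEquiv.ofInjective _ (componentSignCombination_injective (G := G))).trans
    (LinearEquiv.ofEq _ _ range_componentSignCombination)
  rw [← e.finrank_eq, finrank_fintype_fun_eq_card, Nat.card_eq_fintype_card]

end SimpleGraph

section EdgePolytope

variable {n : ℕ} (G : SimpleGraph (Fin n))

theorem edgeSumKernel_eq_comap_dualAnnihilator :
    G.edgeSumKernel =
      (span ℝ (edgeVectors G)).dualAnnihilator.comap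
        (dotProductEquiv ℝ (Fin n) : (Fin n → ℝ) →ₗ[ℝ] Dual ℝ (Fin n → ℝ)) := by
  ext f
  rw [mem_comap, mem_dualAnnihilator]
  change _ ↔ span ℝ (edgeVectors G) ≤ LinearMap.ker (dotProductEquiv ℝ (Fin n) f)
  rw [span_le]
  constructor
  · rintro hf _ ⟨i, j, hij, rfl⟩
    simp [dotProduct_add, hf hij]
  · intro hf i j hij
    simpa [dotProduct_add] using hf ⟨i, j, hij, rfl⟩

theorem finrank_span_edgeVectors_add_finrank_edgeSumKernel :
    finrank ℝ (span ℝ (edgeVectors G)) + finrank ℝ G.edgeSumKernel = n := by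
  rw [edgeSumKernel_eq_comap_dualAnnihilator, comap_equiv_eq_map_symm,
    LinearEquiv.finrank_map_eq, Subspace.finrank_add_finrank_dualAnnihilator_eq, finrank_fin_fun]

theorem dotProductEquiv_one_of_mem_edgeVectors {x : Fin n → ℝ} (hx : x ∈ edgeVectors G) :
    dotProductEquiv ℝ (Fin n) 1 x = 2 := by
  obtain ⟨i, j, -, rfl⟩ := hx
  norm_num [dotProduct_add]

end EdgePolytope

theorem dim_edgePolytope_general {n : ℕ} (G : SimpleGraph (Fin n)) :
    polyDim (edgePolytope G) = n - numBipartiteComponents G - 1 := by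
  rw [polyDim, edgePolytope, vectorSpan_convexHull,
    finrank_vectorSpan_eq_finrank_span_sub_one _ two_ne_zero
      fun _ => dotProductEquiv_one_of_mem_edgeVectors G,
    numBipartiteComponents, ← G.finrank_edgeSumKernel]
  have := finrank_span_edgeVectors_add_finrank_edgeSumKernel G
  omega

/-- For a graph `G` on `{1, …, n}` with no isolated vertices, the dimension of the
edge polytope `P(G)` equals `n - c₀(G) - 1`, where `c₀(G)` is the number of bipartite
connected components of `G`. -/
theorem dim_edgePolytope {n : ℕ} (G : SimpleGraph (Fin n))
    (hiso : ∀ v : Fin n, ∃ w : Fin n, G.Adj v w) :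
    polyDim (edgePolytope G) = n - numBipartiteComponents G - 1 :=
  dim_edgePolytope_general G
end

section
/- Let V ⊂ ℝⁿ be the (finite) vertex set of a polytope P = conv(V), and let U ⊆ V. Then U is the vertex set of a face of P if and only if the affine hull of U is disjoint from the convex hull of V \ U. -/
/-
If `U` is the vertex set of a face exposed by a functional `l`, then `l` is constant on `U`, hence
on its affine hull, and strictly smaller on the other vertices, hence on their convex hull.
Conversely, separate the compact set `conv (V \ U)` strictly from the closed set `aff U`
(Hahn–Banach); the separating functional is bounded below on `aff U`, so it is constant there,
and it exposes the face of `conv V` on which it attains its maximum, whose vertices are exactly `U`.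
-/

open Set

/-- A face of a polytope is the intersection of the polytope with a supporting
hyperplane, together with `∅` and the polytope itself; this is captured by `IsExposed`. -/
def IsFaceOf {n : ℕ} (P F : Set (Fin n → ℝ)) : Prop :=
  IsExposed ℝ P F

theorem AffineSubspace.apply_eq_apply_of_bddBelow_image {E : Type*} [AddCommGroup E]
    [Module ℝ E] (f : E →ₗ[ℝ] ℝ) {S : AffineSubspace ℝ E} (hS : BddBelow (f '' S))
    {a b : E} (ha : a ∈ S) (hb : b ∈ S) : f a = f b := by
  obtain ⟨m, hm⟩ := hS
  by_contra hab
  have hba : f b - f a ≠ 0 := sub_ne_zero_of_ne (Ne.symm hab)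
  -- the point of the line through `a` and `b` at which `f` takes the value `m - 1`
  set t : ℝ := (m - 1 - f a) / (f b - f a)
  have hp : t • (b -ᵥ a) +ᵥ a ∈ S := S.smul_vsub_vadd_mem t hb ha ha
  have hfp : f (t • (b -ᵥ a) +ᵥ a) = m - 1 := by
    simp only [vsub_eq_sub, vadd_eq_add, map_add, map_smul, map_sub, smul_eq_mul, t,
      div_mul_cancel₀ _ hba]
    ring
  linarith [hm ⟨_, hp, hfp⟩]

theorem affineSpan_inter_convexHull_eq_empty_of_forall_eq_of_forall_lt {E : Type*}
    [AddCommGroup E] [Module ℝ E] (f : E →ₗ[ℝ] ℝ) {U W : Set E} {c : ℝ} (hU : ∀ u ∈ U, f u = c)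
    (hW : ∀ w ∈ W, f w < c) : (affineSpan ℝ U : Set E) ∩ convexHull ℝ W = ∅ := by
  refine eq_empty_iff_forall_notMem.mpr fun x ⟨hxU, hxW⟩ => ?_
  have hfx_eq : f x = c :=
    AffineMap.eqOn_affineSpan (f := f.toAffineMap) (g := AffineMap.const ℝ E c) hU hxU
  have hfx_lt : f x < c := convexHull_min hW ((convex_Iio c).linear_preimage f) hxW
  exact hfx_lt.ne hfx_eq

theorem exists_forall_eq_forall_lt_of_affineSpan_inter_convexHull_eq_empty {E : Type*}
    [NormedAddCommGroup E] [NormedSpace ℝ E] {U W : Set E} (hU : U.Finite) (hU₀ : U.Nonempty)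
    (hW : W.Finite) (hUW : (affineSpan ℝ U : Set E) ∩ convexHull ℝ W = ∅) :
    ∃ (f : StrongDual ℝ E) (c : ℝ), (∀ u ∈ U, f u = c) ∧ ∀ w ∈ W, f w < c := by
  have := finiteDimensional_direction_affineSpan_of_finite ℝ hU
  obtain ⟨f, a, b, hfW, hab, hfU⟩ := geometric_hahn_banach_compact_closed
    (convex_convexHull ℝ W) (hW.isCompact_convexHull (𝕜 := ℝ)) (affineSpan ℝ U).convex
    (affineSpan ℝ U).closed_of_finiteDimensional
    (disjoint_iff_inter_eq_empty.mpr (by rwa [inter_comm]))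
  obtain ⟨u₀, hu₀⟩ := hU₀
  have hbdd : BddBelow (f '' affineSpan ℝ U) :=
    ⟨b, forall_mem_image.mpr fun x hx => (hfU x hx).le⟩
  have hconst (x) (hx : x ∈ affineSpan ℝ U) : f x = f u₀ :=
    AffineSubspace.apply_eq_apply_of_bddBelow_image (f : E →ₗ[ℝ] ℝ) hbdd hx
      (subset_affineSpan ℝ U hu₀)
  refine ⟨f, f u₀, fun u hu => hconst u (subset_affineSpan ℝ U hu), fun w hw => ?_⟩
  linarith [hfW w (subset_convexHull ℝ W hw), hfU u₀ (subset_affineSpan ℝ U hu₀)]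

namespace ContinuousLinearMap

variable {E : Type*} [AddCommGroup E] [Module ℝ E] [TopologicalSpace E] {l : StrongDual ℝ E}
  {A : Set E} {x y : E}

theorem apply_eq_of_mem_toExposed (hx : x ∈ l.toExposed A) (hy : y ∈ l.toExposed A) :
    l x = l y :=
  le_antisymm (hy.2 x hx.1) (hx.2 y hy.1)

theorem apply_lt_of_mem_toExposed_of_notMem (hx : x ∈ l.toExposed A) (hy : y ∈ A)
    (hy' : y ∉ l.toExposed A) : l y < l x := by
  obtain ⟨z, hz, hyz⟩ : ∃ z ∈ A, l y < l z := by
    by_contra! h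
    exact hy' ⟨hy, h⟩
  exact hyz.trans_le (hx.2 z hz)

theorem toExposed_convexHull_inter_eq {V U : Set E} {c : ℝ} (hUV : U ⊆ V) (hU : U.Nonempty)
    (hlU : ∀ u ∈ U, l u = c) (hlV : ∀ w ∈ V \ U, l w < c) :
    l.toExposed (convexHull ℝ V) ∩ V = U := by
  have hle : ∀ y ∈ convexHull ℝ V, l y ≤ c := by
    refine fun y hy => convexHull_min (fun w hw => ?_) ((convex_Iic c).linear_preimage
      (l : E →ₗ[ℝ] ℝ)) hy
    by_cases hwU : w ∈ U
    · exact (hlU w hwU).le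
    · exact (hlV w ⟨hw, hwU⟩).le
  refine subset_antisymm (fun x ⟨⟨_, hxmax⟩, hxV⟩ => ?_) fun u hu =>
    ⟨⟨subset_convexHull ℝ V (hUV hu), fun y hy => (hle y hy).trans_eq (hlU u hu).symm⟩, hUV hu⟩
  by_contra hxU
  obtain ⟨u, hu⟩ := hU
  linarith [hxmax u (subset_convexHull ℝ V (hUV hu)), hlV x ⟨hxV, hxU⟩, hlU u hu]

end ContinuousLinearMap

theorem exists_isExposed_convexHull_inter_eq_iff {E : Type*} [NormedAddCommGroup E]
    [NormedSpace ℝ E] {V U : Set E} (hV : V.Finite) (hUV : U ⊆ V) :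
    (∃ F, IsExposed ℝ (convexHull ℝ V) F ∧ F ∩ V = U) ↔
      (affineSpan ℝ U : Set E) ∩ convexHull ℝ (V \ U) = ∅ := by
  rcases U.eq_empty_or_nonempty with rfl | hU
  · simpa using ⟨∅, isExposed_empty, empty_inter V⟩
  constructor
  · rintro ⟨F, hF, rfl⟩
    obtain ⟨u, huF, -⟩ := hU
    obtain ⟨l, rfl⟩ := hF ⟨u, huF⟩
    exact affineSpan_inter_convexHull_eq_empty_of_forall_eq_of_forall_lt (l : E →ₗ[ℝ] ℝ)
      (fun x hx => l.apply_eq_of_mem_toExposed hx.1 huF)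
      fun w hw => l.apply_lt_of_mem_toExposed_of_notMem huF (subset_convexHull ℝ V hw.1)
        fun hwF => hw.2 ⟨hwF, hw.1⟩
  · intro hdisj
    obtain ⟨l, c, hlU, hlV⟩ := exists_forall_eq_forall_lt_of_affineSpan_inter_convexHull_eq_empty
      (hV.subset hUV) hU (hV.subset sdiff_subset) hdisj
    exact ⟨_, ContinuousLinearMap.toExposed.isExposed,
      ContinuousLinearMap.toExposed_convexHull_inter_eq hUV hU hlU hlV⟩

theorem face_criterion_general {n : ℕ} (V : Set (Fin n → ℝ)) (hfin : V.Finite)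
    (U : Set (Fin n → ℝ)) (hU : U ⊆ V) :
    (∃ F : Set (Fin n → ℝ), IsFaceOf (convexHull ℝ V) F ∧ F ∩ V = U) ↔
      (affineSpan ℝ U : Set (Fin n → ℝ)) ∩ convexHull ℝ (V \ U) = ∅ :=
  exists_isExposed_convexHull_inter_eq_iff hfin hU

/-- Let `V ⊂ ℝⁿ` be the finite vertex set of the polytope `P = conv V` and let `U ⊆ V`.
Then `U` is the vertex set of a face of `P` (the vertex set of a face `F` being `F ∩ V`)
if and only if the affine hull of `U` is disjoint from the convex hull of `V \ U`. -/
theorem face_criterion {n : ℕ} (V : Set (Fin n → ℝ)) (hfin : V.Finite)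
    (hvert : V = Set.extremePoints ℝ (convexHull ℝ V))
    (U : Set (Fin n → ℝ)) (hU : U ⊆ V) :
    (∃ F : Set (Fin n → ℝ), IsFaceOf (convexHull ℝ V) F ∧ F ∩ V = U) ↔
      (affineSpan ℝ U : Set (Fin n → ℝ)) ∩ convexHull ℝ (V \ U) = ∅ :=
  face_criterion_general V hfin U hU
end

section
/- Let k ≥ 2 and let H be a finite simple graph with at most 2k vertices. Then H contains no subgraph isomorphic to a member of F_k if and only if every cycle in H is odd and every connected component of H contains at most one cycle. Here F_k is the family of graphs on at most 2k vertices consisting of even cycles and of graphs obtained by joining two odd cycles by a path (including two odd cycles sharing exactly one vertex). -/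
open Set

/-- `H` contains an even cycle (a member of the first kind of the family `𝓕ₖ`;
note that every cycle of `H` has at most as many vertices as `H`). -/
def ContainsEvenCycle {V : Type*} (H : SimpleGraph V) : Prop :=
  ∃ (v : V) (c : H.Walk v v), c.IsCycle ∧ Even c.length

/-- `H` contains a subgraph consisting of two odd cycles joined by a path (a member of
the second kind of the family `𝓕ₖ`): two odd cycles, through `u` and `v` respectively,
meeting each other only if `u = v` (in which case they share exactly the vertex `u`),
together with a path from `u` to `v` meeting the first cycle only in `u` and the second
only in `v`.  The path may have length zero. -/
def ContainsOddDumbbell {V : Type*} (H : SimpleGraph V) : Prop :=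
  ∃ (u v : V) (c : H.Walk u u) (d : H.Walk v v) (p : H.Walk u v),
    c.IsCycle ∧ Odd c.length ∧ d.IsCycle ∧ Odd d.length ∧ p.IsPath ∧
    (∀ x : V, x ∈ c.support → x ∈ d.support → x = u ∧ x = v) ∧
    (∀ x : V, x ∈ p.support → x ∈ c.support → x = u) ∧
    (∀ x : V, x ∈ p.support → x ∈ d.support → x = v)

/-- Every cycle of `H` is odd, and every connected component of `H` contains at most
one cycle (any two cycles lying in the same component have the same edge set). -/
def CactusLike {V : Type*} (H : SimpleGraph V) : Prop :=
  (∀ (v : V) (c : H.Walk v v), c.IsCycle → Odd c.length) ∧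
  (∀ (u v : V) (c : H.Walk u u) (d : H.Walk v v), c.IsCycle → d.IsCycle →
    H.Reachable u v → ∀ e : Sym2 V, e ∈ c.edges ↔ e ∈ d.edges)

/-!
Let `c` and `d` be cycles in one component of a graph with only odd cycles and no odd dumbbell.
If they are vertex-disjoint, a path between them that meets each of them only in an end
completes them to a dumbbell.  Otherwise an edge of `c` outside `d` lies either on an ear of `d` (a path meeting `d` exactly
in its two distinct ends) or on a cycle meeting `d` in a single vertex.  An ear closes up with
one of the two arcs of `d` between its ends to an even cycle, since the arcs have lengths of
different parity; a cycle meeting `d` in one vertex forms a dumbbell with `d` and a path of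
length zero.  Hence `c` and `d` have the same edges.  Conversely, the two cycles of a
dumbbell meet in at most one vertex, so they cannot have the same edges.
-/

namespace SimpleGraph

variable {V : Type*} {G : SimpleGraph V}

namespace Walk

lemma IsPath.start_notMem_support_tail {u v : V} {p : G.Walk u v} (hp : p.IsPath) :
    u ∉ p.support.tail := by
  have hnodup := hp.support_nodup
  rw [← cons_tail_support, List.nodup_cons] at hnodup
  exact hnodup.1

lemma edges_notMem_of_forall_mem_support {u v a y : V} (d : G.Walk u v) {W : G.Walk a y}
    (hW : ∀ z ∈ W.support, z ∈ d.support → z = y) : ∀ e ∈ W.edges, e ∉ d.edges := by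
  intro e he hed
  induction e using Sym2.ind with
  | _ p q =>
    have hp := hW p (W.fst_mem_support_of_mem_edges he) (d.fst_mem_support_of_mem_edges hed)
    have hq := hW q (W.snd_mem_support_of_mem_edges he) (d.snd_mem_support_of_mem_edges hed)
    exact (W.adj_of_mem_edges he).ne (hp.trans hq.symm)

lemma exists_prefix_first_hit (S : Set V) {a b : V} (W : G.Walk a b) (hb : b ∈ S) :
    ∃ y ∈ S, ∃ (W₁ : G.Walk a y) (W₂ : G.Walk y b), W = W₁.append W₂ ∧
      ∀ z ∈ W₁.support, z ∈ S → z = y := by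
  induction W with
  | nil => exact ⟨_, hb, nil, nil, rfl, by simp⟩
  | @cons a a' b h W ih =>
    by_cases ha : a ∈ S
    · exact ⟨a, ha, nil, cons h W, rfl, by simp⟩
    · obtain ⟨y, hy, W₁, W₂, rfl, hW₁⟩ := ih hb
      refine ⟨y, hy, cons h W₁, W₂, rfl, ?_⟩
      simp only [support_cons, List.mem_cons, forall_eq_or_imp]
      exact ⟨fun h => absurd h ha, hW₁⟩

/-- A `d`-path in Diestel's terminology. -/
structure IsEar {x y u v : V} (P : G.Walk x y) (d : G.Walk u v) : Prop where
  isPath : P.IsPath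
  ne : x ≠ y
  start_mem : x ∈ d.support
  end_mem : y ∈ d.support
  edges_notMem : ∀ e ∈ P.edges, e ∉ d.edges
  eq_or_eq_of_mem : ∀ z ∈ P.support, z ∈ d.support → z = x ∨ z = y

lemma isEar_cons {u v a a' y : V} {d : G.Walk u v} (ha : a ∈ d.support) (h : G.Adj a a')
    (hfirst : s(a, a') ∉ d.edges) {W : G.Walk a' y} (hW : W.IsPath) (hy : y ∈ d.support)
    (hne : a ≠ y) (hmeet : ∀ z ∈ W.support, z ∈ d.support → z = y) :
    (cons h W).IsEar d where
  isPath := (cons_isPath_iff h W).mpr ⟨hW, fun haW => hne (hmeet a haW ha)⟩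
  ne := hne
  start_mem := ha
  end_mem := hy
  edges_notMem e he := by
    rw [edges_cons, List.mem_cons] at he
    rcases he with rfl | he
    exacts [hfirst, edges_notMem_of_forall_mem_support d hmeet e he]
  eq_or_eq_of_mem z hz hzd := by
    rw [support_cons, List.mem_cons] at hz
    exact hz.imp id (fun hz => hmeet z hz hzd)

lemma IsPath.exists_isEar {u v a b : V} {d : G.Walk u v} {W : G.Walk a b} (hW : W.IsPath)
    (ha : a ∈ d.support) (hb : b ∈ d.support) (hWd : ∃ e ∈ W.edges, e ∉ d.edges) :
    ∃ (x y : V) (P : G.Walk x y), P.IsEar d := by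
  induction W with
  | nil => simp at hWd
  | @cons a a' b h W ih =>
    obtain ⟨e, he, hed⟩ := hWd
    by_cases hfirst : s(a, a') ∈ d.edges
    · have heW : e ∈ W.edges := by
        rw [edges_cons, List.mem_cons] at he
        exact he.resolve_left (by rintro rfl; exact hed hfirst)
      exact ih hW.of_cons (d.snd_mem_support_of_mem_edges hfirst) hb ⟨e, heW, hed⟩
    · obtain ⟨y, hy, W₁, W₂, rfl, hmeet⟩ := W.exists_prefix_first_hit {z | z ∈ d.support} hb
      have haW : a ∉ (W₁.append W₂).support := ((cons_isPath_iff h _).mp hW).2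
      have hne : a ≠ y := by
        rintro rfl
        exact haW ((mem_support_append_iff _ _).mpr (Or.inl W₁.end_mem_support))
      exact ⟨a, y, _, isEar_cons ha h hfirst hW.of_cons.of_append_left hy hne hmeet⟩

lemma IsCycle.exists_isEar_or_isCycle {u v w : V} {d : G.Walk u v} {c : G.Walk w w}
    (hc : c.IsCycle) (hw : w ∈ d.support) (hcd : ∃ e ∈ c.edges, e ∉ d.edges) :
    (∃ (x y : V) (P : G.Walk x y), P.IsEar d) ∨
      ∃ g : G.Walk w w, g.IsCycle ∧ ∀ z ∈ g.support, z ∈ d.support → z = w := by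
  obtain ⟨w', h, t, rfl⟩ := not_nil_iff.mp hc.not_nil
  obtain ⟨ht, hwt⟩ := (cons_isCycle_iff t h).mp hc
  obtain ⟨e, he, hed⟩ := hcd
  by_cases hfirst : s(w, w') ∈ d.edges
  · have het : e ∈ t.edges := by
      rw [edges_cons, List.mem_cons] at he
      exact he.resolve_left (by rintro rfl; exact hed hfirst)
    exact Or.inl (ht.exists_isEar (d.snd_mem_support_of_mem_edges hfirst) hw ⟨e, het, hed⟩)
  · obtain ⟨y, hy, W₁, W₂, rfl, hmeet⟩ := t.exists_prefix_first_hit {z | z ∈ d.support} hw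
    by_cases hyw : y = w
    · subst hyw
      refine Or.inr ⟨cons h W₁, (cons_isCycle_iff W₁ h).mpr ⟨ht.of_append_left, ?_⟩, ?_⟩
      · exact fun hmem => hwt (by rw [edges_append]; exact List.mem_append_left _ hmem)
      · simpa using hmeet
    · exact Or.inl ⟨w, y, _, isEar_cons hw h hfirst ht.of_append_left hy (Ne.symm hyw) hmeet⟩

lemma IsCycle.exists_isPath_split {u x y : V} {c : G.Walk u u} (hc : c.IsCycle)
    (hx : x ∈ c.support) (hy : y ∈ c.support) (hxy : x ≠ y) :
    ∃ (p : G.Walk x y) (q : G.Walk y x), p.IsPath ∧ q.IsPath ∧ p.length + q.length = c.length ∧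
      p.support ⊆ c.support ∧ q.support ⊆ c.support ∧ p.edges ⊆ c.edges ∧ q.edges ⊆ c.edges := by
  classical
  set c' := c.rotate x hx
  have hy' : y ∈ c'.support := (mem_support_rotate_iff c x hx).mpr hy
  have hsplit : (c'.takeUntil y hy').append (c'.dropUntil y hy') = c' := c'.take_spec hy'
  have hc' : ((c'.takeUntil y hy').append (c'.dropUntil y hy')).IsCycle := by
    rw [hsplit]; exact hc.rotate hx
  have hsupp : c'.support ⊆ c.support := fun z hz => (mem_support_rotate_iff c x hx).mp hz
  have hedges : c'.edges ⊆ c.edges := fun e he => (rotate_edges c x hx).perm.mem_iff.mp he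
  refine ⟨c'.takeUntil y hy', c'.dropUntil y hy',
    hc'.isPath_of_append_left (not_nil_of_ne hxy.symm),
    hc'.isPath_of_append_right (not_nil_of_ne hxy), ?_,
    List.Subset.trans (c'.isSubwalk_takeUntil hy').support_subset hsupp,
    List.Subset.trans (c'.isSubwalk_dropUntil hy').support_subset hsupp,
    List.Subset.trans (c'.isSubwalk_takeUntil hy').edges_subset hedges,
    List.Subset.trans (c'.isSubwalk_dropUntil hy').edges_subset hedges⟩
  rw [← length_append, hsplit, length_rotate]

lemma IsEar.isCycle_append {x y u v : V} {P : G.Walk x y} {d : G.Walk u v} (hP : P.IsEar d)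
    {Q : G.Walk y x} (hQ : Q.IsPath) (hQs : Q.support ⊆ d.support) (hQe : Q.edges ⊆ d.edges) :
    (P.append Q).IsCycle := by
  rw [isCycle_def, isTrail_append, tail_support_append, List.nodup_append']
  refine ⟨⟨hP.isPath.isTrail, hQ.isTrail, fun e heP heQ => hP.edges_notMem e heP (hQe heQ)⟩,
    fun h => not_nil_of_ne hP.ne (nil_append_iff.mp (h ▸ Nil.nil)).1,
    hP.isPath.support_nodup.tail, hQ.support_nodup.tail, ?_⟩
  intro z hzP hzQ
  rcases hP.eq_or_eq_of_mem z (List.mem_of_mem_tail hzP) (hQs (List.mem_of_mem_tail hzQ))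
    with rfl | rfl
  · exact hP.isPath.start_notMem_support_tail hzP
  · exact hQ.start_notMem_support_tail hzQ

lemma IsEar.containsEvenCycle {x y u : V} {P : G.Walk x y} {d : G.Walk u u} (hP : P.IsEar d)
    (hd : d.IsCycle) (hodd : Odd d.length) : ContainsEvenCycle G := by
  obtain ⟨p, q, hp, hq, hlen, hps, hqs, hpe, hqe⟩ :=
    hd.exists_isPath_split hP.start_mem hP.end_mem hP.ne
  have hPq := hP.isCycle_append hq hqs hqe
  have hPp := hP.isCycle_append hp.reverse (by simpa using hps) (by simpa using hpe)
  rcases Nat.even_or_odd (P.append q).length with heven | hodd'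
  · exact ⟨x, _, hPq, heven⟩
  · refine ⟨x, _, hPp, ?_⟩
    simp only [length_append, length_reverse] at hodd' ⊢
    grind

end Walk

lemma Reachable.exists_isPath_between (S T : Set V) {u v : V} (hu : u ∈ S) (hv : v ∈ T)
    (huv : G.Reachable u v) :
    ∃ x ∈ S, ∃ y ∈ T, ∃ p : G.Walk x y, p.IsPath ∧
      (∀ z ∈ p.support, z ∈ S → z = x) ∧ ∀ z ∈ p.support, z ∈ T → z = y := by
  obtain ⟨q, hq⟩ := huv.exists_isPath
  obtain ⟨y, hy, W₁, W₁', rfl, hW₁⟩ := q.exists_prefix_first_hit T hv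
  obtain ⟨x, hx, W₂, W₂', hsplit, hW₂⟩ := W₁.reverse.exists_prefix_first_hit S hu
  have hW₂path : W₂.IsPath := by
    have := (Walk.IsPath.of_append_left hq).reverse
    rw [hsplit] at this
    exact this.of_append_left
  have hW₂W₁ : ∀ z ∈ W₂.support, z ∈ W₁.support := fun z hz => by
    have : z ∈ W₁.reverse.support := hsplit ▸ (Walk.mem_support_append_iff W₂ W₂').mpr (Or.inl hz)
    simpa using this
  refine ⟨x, hx, y, hy, W₂.reverse, hW₂path.reverse, ?_, ?_⟩
  · exact fun z hz => hW₂ z (by simpa using hz)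
  · exact fun z hz => hW₁ z (hW₂W₁ z (by simpa using hz))

end SimpleGraph

open SimpleGraph Walk

lemma odd_length_of_not_containsEvenCycle {V : Type*} {G : SimpleGraph V}
    (hG : ¬ ContainsEvenCycle G) {v : V} {c : G.Walk v v} (hc : c.IsCycle) : Odd c.length :=
  Nat.not_even_iff_odd.mp fun heven => hG ⟨v, c, hc, heven⟩

lemma containsOddDumbbell_of_mem_support {V : Type*} {G : SimpleGraph V} {u v x y : V}
    {c : G.Walk u u} {d : G.Walk v v} (hc : c.IsCycle) (hco : Odd c.length) (hd : d.IsCycle)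
    (hdo : Odd d.length) (hx : x ∈ c.support) (hy : y ∈ d.support) {p : G.Walk x y}
    (hp : p.IsPath) (hcd : ∀ z ∈ c.support, z ∈ d.support → z = x ∧ z = y)
    (hpc : ∀ z ∈ p.support, z ∈ c.support → z = x)
    (hpd : ∀ z ∈ p.support, z ∈ d.support → z = y) : ContainsOddDumbbell G := by
  classical
  have hc' {z : V} : z ∈ (c.rotate x hx).support → z ∈ c.support :=
    (mem_support_rotate_iff c x hx).mp
  have hd' {z : V} : z ∈ (d.rotate y hy).support → z ∈ d.support :=
    (mem_support_rotate_iff d y hy).mp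
  exact ⟨x, y, c.rotate x hx, d.rotate y hy, p, hc.rotate hx, by simpa using hco,
    hd.rotate hy, by simpa using hdo, hp, fun z hzc hzd => hcd z (hc' hzc) (hd' hzd),
    fun z hz hzc => hpc z hz (hc' hzc), fun z hz hzd => hpd z hz (hd' hzd)⟩

lemma edges_subset_of_isCycle_of_reachable {V : Type*} {G : SimpleGraph V}
    (hE : ¬ ContainsEvenCycle G) (hD : ¬ ContainsOddDumbbell G) {u v : V} {c : G.Walk u u}
    {d : G.Walk v v} (hc : c.IsCycle) (hd : d.IsCycle) (huv : G.Reachable u v) :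
    c.edges ⊆ d.edges := by
  classical
  have hdo := odd_length_of_not_containsEvenCycle hE hd
  by_cases hshare : ∃ w ∈ c.support, w ∈ d.support
  · obtain ⟨w, hwc, hwd⟩ := hshare
    intro e he
    by_contra hed
    have he' : e ∈ (c.rotate w hwc).edges := (rotate_edges c w hwc).perm.mem_iff.mpr he
    rcases (hc.rotate hwc).exists_isEar_or_isCycle hwd ⟨e, he', hed⟩ with
      ⟨x, y, P, hP⟩ | ⟨g, hg, hgd⟩
    · exact hE (hP.containsEvenCycle hd hdo)
    · exact hD (containsOddDumbbell_of_mem_support hg (odd_length_of_not_containsEvenCycle hE hg)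
        hd hdo g.start_mem_support hwd IsPath.nil (fun z hz hzd => ⟨hgd z hz hzd, hgd z hz hzd⟩)
        (by simp) (by simp))
  · push Not at hshare
    obtain ⟨x, hx, y, hy, p, hp, hpc, hpd⟩ :=
      huv.exists_isPath_between {z | z ∈ c.support} {z | z ∈ d.support}
        c.start_mem_support d.start_mem_support
    exact (hD (containsOddDumbbell_of_mem_support hc (odd_length_of_not_containsEvenCycle hE hc)
      hd hdo hx hy hp (fun z hz hzd => absurd hzd (hshare z hz)) hpc hpd)).elim

lemma not_containsOddDumbbell_of_cactusLike {V : Type*} {G : SimpleGraph V} (hG : CactusLike G) :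
    ¬ ContainsOddDumbbell G := by
  rintro ⟨u, v, c, d, p, hc, -, hd, -, -, hcd, -, -⟩
  obtain ⟨u', h, t, rfl⟩ := not_nil_iff.mp hc.not_nil
  have hd' : s(u, u') ∈ d.edges := (hG.2 u v _ d hc hd ⟨p⟩ _).mp (by simp)
  exact h.ne (hcd u' (by simp) (d.snd_mem_support_of_mem_edges hd')).1.symm

theorem Fk_free_iff_cactusLike_general {V : Type*} (H : SimpleGraph V) :
    (¬ ContainsEvenCycle H ∧ ¬ ContainsOddDumbbell H) ↔ CactusLike H := by
  constructor
  · rintro ⟨hE, hD⟩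
    refine ⟨fun v c hc => odd_length_of_not_containsEvenCycle hE hc, ?_⟩
    intro u v c d hc hd huv e
    exact ⟨fun he => edges_subset_of_isCycle_of_reachable hE hD hc hd huv he,
      fun he => edges_subset_of_isCycle_of_reachable hE hD hd hc huv.symm he⟩
  · intro hH
    refine ⟨?_, not_containsOddDumbbell_of_cactusLike hH⟩
    rintro ⟨v, c, hc, heven⟩
    exact Nat.not_odd_iff_even.mpr heven (hH.1 v c hc)

/-- Let `k ≥ 2` and let `H` be a graph with at most `2k` vertices.  Then `H` contains
no subgraph isomorphic to a member of the family `𝓕ₖ` (even cycles and pairs of odd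
cycles joined by a path, on at most `2k` vertices — since `H` itself has at most `2k`
vertices, the size restriction is automatic) if and only if every cycle of `H` is odd
and every connected component of `H` contains at most one cycle. -/
theorem Fk_free_iff_cactusLike {V : Type*} [Fintype V] (k : ℕ) (hk : 2 ≤ k)
    (H : SimpleGraph V) (hcard : Fintype.card V ≤ 2 * k) :
    (¬ ContainsEvenCycle H ∧ ¬ ContainsOddDumbbell H) ↔ CactusLike H :=
  Fk_free_iff_cactusLike_general H
end

section
/- Let k ≥ 2 and let P and Q be two distinct paths of length k with the same pair of endpoints in a simple graph. If the union P ∪ Q (the subgraph formed by all vertices and edges of P and Q) contains no cycle of length at most k, then there exist four pairwise vertex-disjoint paths α, β, P', Q' such that P is the concatenation α P' β and Q is the concatenation α Q' β (i.e., P and Q agree on a common initial segment α and a common final segment β, and their middle segments P' and Q' are internally disjoint). -/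
/-!
Strip the longest common prefix `α` and the longest common suffix `β` of `P` and `Q`; the middle
parts `P'`, `Q'` have equal length `ℓ ≤ k` and differ in their second and in their penultimate
vertex. If they shared an inner vertex `x`, then both the two segments before `x` and the two
segments after `x` would be distinct paths with common ends, each pair spanning a cycle of length at
most the sum of its lengths. These sums add up to `2ℓ`, so one of the cycles has length `≤ ℓ ≤ k`.
-/

namespace SimpleGraph.Walk

variable {V : Type*} {G : SimpleGraph V}

lemma snd_append_of_not_nil {u v w : V} {p : G.Walk u v} (q : G.Walk v w) (hp : ¬p.Nil) :
    (p.append q).snd = p.snd := by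
  have : 1 ≤ p.length := by rwa [Nat.one_le_iff_ne_zero, ne_eq, length_eq_zero_iff]
  simp only [snd, getVert_append', if_pos this]

lemma penultimate_append_of_not_nil {u v w : V} (p : G.Walk u v) {q : G.Walk v w} (hq : ¬q.Nil) :
    (p.append q).penultimate = q.penultimate := by
  have : q.length ≠ 0 := by rwa [ne_eq, length_eq_zero_iff]
  simp only [penultimate, getVert_append, length_append]
  rw [if_neg (by omega)]
  congr 1
  omega

lemma penultimate_dropUntil [DecidableEq V] {u v w : V} {p : G.Walk u v} (hw : w ≠ v)
    (h : w ∈ p.support) : (p.dropUntil w h).penultimate = p.penultimate := by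
  conv_rhs => rw [← take_spec p h]
  exact (penultimate_append_of_not_nil _ fun hnil => hw hnil.eq).symm

lemma IsTrail.length_le_of_edges_subset {u v : V} {c : G.Walk u v} (hc : c.IsTrail)
    {l : List (Sym2 V)} (h : c.edges ⊆ l) : c.length ≤ l.length := by
  classical
  simpa using (List.subperm_of_subset hc.edges_nodup h).length_le

theorem exists_isCycle_edges_subset_of_isPath_ne {u v : V} {p q : G.Walk u v}
    (hp : p.IsPath) (hq : q.IsPath) (hne : p ≠ q) :
    ∃ (w : V) (c : G.Walk w w), c.IsCycle ∧ c.edges ⊆ p.edges ++ q.edges := by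
  set H := fromEdgeSet {e | e ∈ p.edges ++ q.edges}
  have hHG : H ≤ G := G.fromEdgeSet_le.mpr fun e ⟨he, _⟩ => by
    rcases List.mem_append.mp he with he | he
    exacts [p.edges_subset_edgeSet he, q.edges_subset_edgeSet he]
  have toH : ∀ {x y : V} (r : G.Walk x y), r.edges ⊆ p.edges ++ q.edges →
      ∀ e ∈ r.edges, e ∈ H.edgeSet := fun r hr e he => by
    rw [edgeSet_fromEdgeSet]
    exact ⟨hr he, G.not_isDiag_of_mem_edgeSet (r.edges_subset_edgeSet he)⟩
  -- `p` and `q` are distinct paths in the graph spanned by their edges, so that graph has a cycle.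
  by_contra hno
  have hH : H.IsAcyclic := fun w c hc =>
    hno ⟨w, c.mapLe hHG, hc.mapLe hHG, fun e he => by
      have := c.edges_subset_edgeSet (edges_mapLe_eq_edges hHG c ▸ he)
      rw [edgeSet_fromEdgeSet] at this
      exact this.1⟩
  have hpq := (hH.subsingleton_path u v).elim
    ⟨p.transfer H (toH p (List.subset_append_left _ _)), hp.transfer _⟩
    ⟨q.transfer H (toH q (List.subset_append_right _ _)), hq.transfer _⟩
  exact hne (ext_support (by simpa [support_transfer] using congrArg (·.1.support) hpq))

theorem exists_isCycle_length_le_of_isPath_ne {u v : V} {p q : G.Walk u v}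
    (hp : p.IsPath) (hq : q.IsPath) (hne : p ≠ q) :
    ∃ (w : V) (c : G.Walk w w), c.IsCycle ∧ c.length ≤ p.length + q.length ∧
      c.edges ⊆ p.edges ++ q.edges := by
  obtain ⟨w, c, hc, hsub⟩ := exists_isCycle_edges_subset_of_isPath_ne hp hq hne
  exact ⟨w, c, hc, by simpa using hc.isTrail.length_le_of_edges_subset hsub, hsub⟩

theorem takeUntil_eq_or_dropUntil_eq [DecidableEq V] {u v x : V} {p q : G.Walk u v}
    (hp : p.IsPath) (hq : q.IsPath) (hlen : p.length = q.length)
    (hcyc : ∀ (w : V) (c : G.Walk w w), c.IsCycle → c.edges ⊆ p.edges ++ q.edges →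
      p.length < c.length)
    (hxp : x ∈ p.support) (hxq : x ∈ q.support) :
    p.takeUntil x hxp = q.takeUntil x hxq ∨ p.dropUntil x hxp = q.dropUntil x hxq := by
  by_contra! ⟨htake, hdrop⟩
  obtain ⟨_, c₁, hc₁, hlen₁, hsub₁⟩ :=
    exists_isCycle_length_le_of_isPath_ne (hp.takeUntil hxp) (hq.takeUntil hxq) htake
  obtain ⟨_, c₂, hc₂, hlen₂, hsub₂⟩ :=
    exists_isCycle_length_le_of_isPath_ne (hp.dropUntil hxp) (hq.dropUntil hxq) hdrop
  have h₁ := hcyc _ c₁ hc₁ <| List.Subset.trans hsub₁ <|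
    ((p.edges_takeUntil_prefix_edges hxp).sublist.append
      (q.edges_takeUntil_prefix_edges hxq).sublist).subset
  have h₂ := hcyc _ c₂ hc₂ <| List.Subset.trans hsub₂ <|
    ((p.edges_dropUntil_suffix_edges hxp).sublist.append
      (q.edges_dropUntil_suffix_edges hxq).sublist).subset
  -- The two cycles have total length at most `p.length + q.length = 2 * p.length`.
  have hsplit_p := congrArg length (p.take_spec hxp)
  have hsplit_q := congrArg length (q.take_spec hxq)
  rw [length_append] at hsplit_p hsplit_q
  omega

def InternallyDisjoint {u v : V} (p q : G.Walk u v) : Prop :=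
  ∀ x : V, x ∈ p.support → x ∈ q.support → x = u ∨ x = v

theorem internallyDisjoint_of_snd_ne_of_penultimate_ne [DecidableEq V] {u v : V}
    {p q : G.Walk u v} (hp : p.IsPath) (hq : q.IsPath) (hlen : p.length = q.length)
    (hcyc : ∀ (w : V) (c : G.Walk w w), c.IsCycle → c.edges ⊆ p.edges ++ q.edges →
      p.length < c.length)
    (hsnd : p.Nil ∨ p.snd ≠ q.snd) (hpen : p.Nil ∨ p.penultimate ≠ q.penultimate) :
    p.InternallyDisjoint q := by
  intro x hxp hxq
  rcases hsnd with hnil | hsnd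
  · simp_all [nil_iff_support_eq.mp hnil]
  rcases hpen with hnil | hpen
  · simp_all [nil_iff_support_eq.mp hnil]
  by_contra! ⟨hxu, hxv⟩
  rcases takeUntil_eq_or_dropUntil_eq hp hq hlen hcyc hxp hxq with h | h
  · exact hsnd (by rw [← snd_takeUntil hxu p hxp, ← snd_takeUntil hxu q hxq, h])
  · exact hpen (by rw [← penultimate_dropUntil hxv hxp, ← penultimate_dropUntil hxv hxq, h])

theorem exists_maximal_common_prefix {u v : V} (p q : G.Walk u v)
    (hlen : p.length = q.length) :
    ∃ (a : V) (α : G.Walk u a) (p₁ q₁ : G.Walk a v),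
      p = α.append p₁ ∧ q = α.append q₁ ∧ (p₁.Nil ∨ p₁.snd ≠ q₁.snd) := by
  induction p with
  | nil => exact ⟨_, nil, nil, q, rfl, rfl, Or.inl Nil.nil⟩
  | @cons _ w _ h p ih =>
    cases q with
    | nil => simp at hlen
    | @cons _ w' _ h' q =>
      by_cases hw : w = w'
      · subst hw
        obtain ⟨a, α, p₁, q₁, rfl, rfl, hsnd⟩ := ih q (by simpa using hlen)
        exact ⟨a, cons h α, p₁, q₁, rfl, rfl, hsnd⟩
      · exact ⟨_, nil, cons h p, cons h' q, rfl, rfl, Or.inr (by simpa using hw)⟩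

theorem exists_maximal_common_suffix {u v : V} (p q : G.Walk u v)
    (hlen : p.length = q.length) :
    ∃ (b : V) (p₁ q₁ : G.Walk u b) (β : G.Walk b v),
      p = p₁.append β ∧ q = q₁.append β ∧ (p₁.Nil ∨ p₁.penultimate ≠ q₁.penultimate) := by
  obtain ⟨b, β, p₁, q₁, hp, hq, hsnd⟩ :=
    exists_maximal_common_prefix p.reverse q.reverse (by simpa using hlen)
  refine ⟨b, p₁.reverse, q₁.reverse, β.reverse, ?_, ?_, by simpa using hsnd⟩
  · rw [← reverse_append, ← hp, reverse_reverse]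
  · rw [← reverse_append, ← hq, reverse_reverse]

end SimpleGraph.Walk

open SimpleGraph Walk in
theorem union_of_paths_general {V : Type*} (G : SimpleGraph V) (k : ℕ)
    (u v : V) (P Q : G.Walk u v)
    (hP : P.IsPath) (hQ : Q.IsPath)
    (hPk : P.length = k) (hQk : Q.length = k)
    (hnocycle : ¬ ∃ (w : V) (c : G.Walk w w), c.IsCycle ∧ c.length ≤ k ∧
      ∀ e ∈ c.edges, e ∈ P.edges ∨ e ∈ Q.edges) :
    ∃ (a b : V) (α : G.Walk u a) (P' Q' : G.Walk a b) (β : G.Walk b v),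
      α.IsPath ∧ β.IsPath ∧ P'.IsPath ∧ Q'.IsPath ∧
      P = α.append (P'.append β) ∧ Q = α.append (Q'.append β) ∧
      ∀ x : V, x ∈ P'.support → x ∈ Q'.support → (x = a ∨ x = b) := by
  classical
  obtain ⟨a, α, P₁, Q₁, rfl, rfl, hfirst⟩ := exists_maximal_common_prefix P Q (hPk.trans hQk.symm)
  obtain ⟨b, P', Q', β, rfl, rfl, hlast⟩ :=
    exists_maximal_common_suffix P₁ Q₁ (by simp only [length_append] at hPk hQk; omega)
  simp only [length_append] at hPk hQk
  have hlen : P'.length = Q'.length := by omega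
  have hfirst' : P'.Nil ∨ P'.snd ≠ Q'.snd := by
    by_cases hP' : P'.Nil
    · exact Or.inl hP'
    have hQ' : ¬Q'.Nil := by rwa [← length_eq_zero_iff, ← hlen, length_eq_zero_iff]
    rw [snd_append_of_not_nil β hP', snd_append_of_not_nil β hQ'] at hfirst
    exact hfirst.imp (fun h => (nil_append_iff.mp h).1) id
  have hcyc : ∀ (w : V) (c : G.Walk w w), c.IsCycle → c.edges ⊆ P'.edges ++ Q'.edges →
      P'.length < c.length := by
    refine fun w c hc hsub => Nat.lt_of_not_le fun hle => hnocycle ⟨w, c, hc, by omega, ?_⟩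
    intro e he
    rcases List.mem_append.mp (hsub he) with h | h <;> simp [edges_append, h]
  have hP₁ := hP.of_append_right
  have hQ₁ := hQ.of_append_right
  exact ⟨a, b, α, P', Q', β, hP.of_append_left, hP₁.of_append_right, hP₁.of_append_left,
    hQ₁.of_append_left, rfl, rfl, internallyDisjoint_of_snd_ne_of_penultimate_ne
      hP₁.of_append_left hQ₁.of_append_left hlen hcyc hfirst' hlast⟩

/-- Let `k ≥ 2` and let `P` and `Q` be two distinct paths of length `k` with the same
endpoints `u`, `v` in a simple graph `G`.  If the union `P ∪ Q` (the subgraph formed by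
all vertices and edges of `P` and `Q`) contains no cycle of length at most `k`, then
`P` and `Q` agree on a common initial segment `α` and a common final segment `β`, and
their middle segments `P'` and `Q'` are internally vertex-disjoint paths. -/
theorem union_of_paths {V : Type*} (G : SimpleGraph V) (k : ℕ) (hk : 2 ≤ k)
    (u v : V) (P Q : G.Walk u v)
    (hP : P.IsPath) (hQ : Q.IsPath)
    (hPk : P.length = k) (hQk : Q.length = k) (hne : P ≠ Q)
    (hnocycle : ¬ ∃ (w : V) (c : G.Walk w w), c.IsCycle ∧ c.length ≤ k ∧
      ∀ e ∈ c.edges, e ∈ P.edges ∨ e ∈ Q.edges) :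
    ∃ (a b : V) (α : G.Walk u a) (P' Q' : G.Walk a b) (β : G.Walk b v),
      α.IsPath ∧ β.IsPath ∧ P'.IsPath ∧ Q'.IsPath ∧
      P = α.append (P'.append β) ∧ Q = α.append (Q'.append β) ∧
      ∀ x : V, x ∈ P'.support → x ∈ Q'.support → (x = a ∨ x = b) :=
  union_of_paths_general G k u v P Q hP hQ hPk hQk hnocycle
end

section
/- Let k ≥ 2 and let G be a finite simple graph that contains no cycle of length at most k and no even cycle of length at most 2k. Then for every ordered pair of vertices u, v of G there is at most one path of length k from u to v in G. -/
/-!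
If `p ≠ q`, the symmetric difference `D` of their edge sets is nonempty, has an even number
`≤ 2k` of edges, and meets every vertex in an even number of edges. Such an edge set contains
a cycle: if it were a forest, a longest path in it could be extended at an end, since every
vertex it touches has degree at least `2`. That cycle `C` has length `> k`, hence is odd as
`|C| ≤ 2k`. Then `D \ C` is again a nonempty even edge set, now with fewer than `k` edges, so
it contains a cycle of length `< k`: a contradiction.
-/

open Finset
open scoped symmDiff

theorem Finset.even_card_symmDiff_iff {α : Type*} [DecidableEq α] (s t : Finset α) :
    Even #(s ∆ t) ↔ (Even #s ↔ Even #t) := by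
  have hsub : s ∩ t ⊆ s ∪ t := inter_subset_left.trans subset_union_left
  have hcard : #(s ∆ t) + #(s ∩ t) = #(s ∪ t) := by
    rw [symmDiff_eq_sup_sdiff_inf, sup_eq_union, inf_eq_inter, card_sdiff_of_subset hsub,
      Nat.sub_add_cancel (card_le_card hsub)]
  have := card_union_add_card_inter s t
  simp only [Nat.even_iff]
  omega

theorem Finset.filter_symmDiff {α : Type*} [DecidableEq α] (p : α → Prop) [DecidablePred p]
    (s t : Finset α) : (s ∆ t).filter p = s.filter p ∆ t.filter p := by
  ext a
  simp only [mem_filter, mem_symmDiff]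
  tauto

namespace SimpleGraph

variable {V : Type*} {G : SimpleGraph V}

theorem Walk.IsPath.eq_of_edges_subset {u v : V} {p q : G.Walk u v} (hp : p.IsPath)
    (hq : q.IsPath) (h : p.edges ⊆ q.edges) : p = q := by
  induction p with
  | nil => exact (isPath_iff_nil.mp hq).eq_nil.symm
  | @cons u w v _ p ih =>
    cases q with
    | nil => simp at h
    | @cons _ w' _ _ q =>
      rw [cons_isPath_iff] at hp hq
      have hw : w = w' := by
        have : s(u, w) = s(u, w') ∨ s(u, w) ∈ q.edges := by
          simpa using h (List.mem_cons_self ..)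
        rcases this with hsame | hq'
        · exact Sym2.congr_right.mp hsame
        · exact absurd (q.fst_mem_support_of_mem_edges hq') hq.2
      subst hw
      refine congrArg _ (ih hp.1 hq.1 fun e he => ?_)
      have : e = s(u, w) ∨ e ∈ q.edges := by simpa using h (List.mem_cons_of_mem _ he)
      refine this.resolve_left ?_
      rintro rfl
      exact hp.2 (p.fst_mem_support_of_mem_edges he)

variable [DecidableEq V]

theorem Walk.IsTrail.card_edges_toFinset {u v : V} {p : G.Walk u v} (hp : p.IsTrail) :
    #p.edges.toFinset = p.length := by
  rw [List.toFinset_card_of_nodup hp.edges_nodup, Walk.length_edges]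

theorem Walk.IsTrail.even_card_filter_mem_edges_toFinset_iff {u v : V}
    {p : G.Walk u v} (hp : p.IsTrail) (x : V) :
    Even #{e ∈ p.edges.toFinset | x ∈ e} ↔ (u ≠ v → x ≠ u ∧ x ≠ v) := by
  rw [← hp.even_countP_edges_iff x, List.countP_eq_length_filter,
    ← List.toFinset_card_of_nodup (hp.edges_nodup.filter _), List.toFinset_filter]
  simp

def IsEvenEdgeSet (D : Finset (Sym2 V)) : Prop :=
  ∀ x : V, Even #{e ∈ D | x ∈ e}

theorem isEvenEdgeSet_symmDiff {s t : Finset (Sym2 V)}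
    (h : ∀ x : V, Even #{e ∈ s | x ∈ e} ↔ Even #{e ∈ t | x ∈ e}) :
    IsEvenEdgeSet (s ∆ t) := fun x => by
  rw [filter_symmDiff, even_card_symmDiff_iff]
  exact h x

theorem IsEvenEdgeSet.symmDiff {s t : Finset (Sym2 V)} (hs : IsEvenEdgeSet s)
    (ht : IsEvenEdgeSet t) : IsEvenEdgeSet (s ∆ t) :=
  isEvenEdgeSet_symmDiff fun x => iff_of_true (hs x) (ht x)

theorem Walk.IsTrail.isEvenEdgeSet_edges_toFinset_symmDiff {u v : V} {p q : G.Walk u v}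
    (hp : p.IsTrail) (hq : q.IsTrail) : IsEvenEdgeSet (p.edges.toFinset ∆ q.edges.toFinset) :=
  SimpleGraph.isEvenEdgeSet_symmDiff fun x => by
    rw [hp.even_card_filter_mem_edges_toFinset_iff, hq.even_card_filter_mem_edges_toFinset_iff]

theorem Walk.IsTrail.isEvenEdgeSet_edges_toFinset {u : V} {c : G.Walk u u} (hc : c.IsTrail) :
    IsEvenEdgeSet c.edges.toFinset :=
  fun x => (hc.even_card_filter_mem_edges_toFinset_iff x).2 fun h => absurd rfl h

theorem IsAcyclic.snd_eq_of_adj_of_mem_support (hG : G.IsAcyclic) {u v z : V} {p : G.Walk u v}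
    (hp : p.IsPath) (huz : G.Adj u z) (hz : z ∈ p.support) : p.snd = z := by
  have hpre : p.takeUntil z hz = huz.toWalk := congrArg Subtype.val <|
    (hG.subsingleton_path u z).elim ⟨_, hp.takeUntil hz⟩ ⟨_, .of_adj huz⟩
  rw [← p.snd_takeUntil huz.ne.symm hz, hpre]
  simp

theorem not_isAcyclic_of_forall_adj_exists_ne [Finite G.edgeSet] {a b : V} (hab : G.Adj a b)
    (h : ∀ x y, G.Adj x y → ∃ z ≠ y, G.Adj x z) : ¬ G.IsAcyclic := by
  intro hG
  have : Nonempty V := ⟨a⟩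
  obtain ⟨u, v, p, hp, hmax⟩ := Walk.exists_isPath_forall_isPath_length_le_length G
  have hp_nil : ¬ p.Nil := fun hnil => by
    simpa [hnil.length_eq_zero] using hmax a b hab.toWalk (.of_adj hab)
  obtain ⟨z, hz, huz⟩ := h u p.snd (p.adj_snd hp_nil)
  have hzp : z ∉ p.support := fun hzp => hz (hG.snd_eq_of_adj_of_mem_support hp huz hzp).symm
  simpa using hmax z v (.cons huz.symm p) (hp.cons hzp)

theorem IsEvenEdgeSet.exists_isCycle {D : Finset (Sym2 V)} (hD : IsEvenEdgeSet D)
    (hne : D.Nonempty) (hDG : (D : Set (Sym2 V)) ⊆ G.edgeSet) :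
    ∃ (w : V) (c : G.Walk w w), c.IsCycle ∧ c.edges.toFinset ⊆ D := by
  set H := fromEdgeSet (D : Set (Sym2 V))
  have hHD : H.edgeSet ⊆ D := by simp [H, edgeSet_fromEdgeSet]
  have hadj (x y : V) (h : s(x, y) ∈ D) : H.Adj x y :=
    (fromEdgeSet_adj _).2 ⟨h, (G.mem_edgeSet.1 (hDG h)).ne⟩
  have : Finite H.edgeSet := D.finite_toSet.subset hHD
  have hleaf (x y : V) (hxy : H.Adj x y) : ∃ z ≠ y, H.Adj x z := by
    have hxy' : s(x, y) ∈ {e ∈ D | x ∈ e} := mem_filter.2 ⟨hHD hxy, Sym2.mem_mk_left x y⟩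
    have h2 : 1 < #{e ∈ D | x ∈ e} := by
      obtain ⟨m, hm⟩ := hD x
      have := card_pos.2 ⟨_, hxy'⟩
      omega
    obtain ⟨e, he, hne⟩ := exists_mem_ne h2 s(x, y)
    obtain ⟨heD, hxe⟩ := mem_filter.1 he
    obtain ⟨z, rfl⟩ := Sym2.mem_iff_exists.1 hxe
    exact ⟨z, fun hzy => hne (hzy ▸ rfl), hadj x z heD⟩
  obtain ⟨e, he⟩ := hne
  induction e using Sym2.ind with | _ a b => ?_
  by_contra! hno
  refine not_isAcyclic_of_forall_adj_exists_ne (hadj a b he) hleaf fun w c hc => ?_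
  have hcG : ∀ e ∈ c.edges, e ∈ G.edgeSet := fun e he => hDG (hHD (c.edges_subset_edgeSet he))
  refine hno w (c.transfer G hcG) (hc.transfer hcG) fun e he => ?_
  rw [List.mem_toFinset, Walk.edges_transfer] at he
  exact hHD (c.edges_subset_edgeSet he)

theorem IsEvenEdgeSet.exists_isCycle_length_le_card_sub {D : Finset (Sym2 V)}
    (hD : IsEvenEdgeSet D) (hDG : (D : Set (Sym2 V)) ⊆ G.edgeSet) {u : V} {c : G.Walk u u}
    (hc : c.IsCycle) (hcD : c.edges.toFinset ⊆ D) (hlt : c.length < #D) :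
    ∃ (w : V) (c' : G.Walk w w), c'.IsCycle ∧ c'.length ≤ #D - c.length := by
  have hcard : #(D \ c.edges.toFinset) = #D - c.length := by
    rw [card_sdiff_of_subset hcD, hc.isTrail.card_edges_toFinset]
  have heven : IsEvenEdgeSet (D \ c.edges.toFinset) :=
    symmDiff_of_ge hcD ▸ hD.symmDiff hc.isTrail.isEvenEdgeSet_edges_toFinset
  obtain ⟨w, c', hc', hc'D⟩ := heven.exists_isCycle (card_pos.1 (by omega))
    fun e he => hDG (sdiff_subset (mem_coe.1 he))
  exact ⟨w, c', hc', hcard ▸ hc'.isTrail.card_edges_toFinset ▸ card_le_card hc'D⟩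

end SimpleGraph

open SimpleGraph

theorem unique_path_of_length_k_general {V : Type*} (G : SimpleGraph V) (k : ℕ)
    (hshort : ¬ ∃ (v : V) (c : G.Walk v v), c.IsCycle ∧ c.length ≤ k)
    (heven : ¬ ∃ (v : V) (c : G.Walk v v), c.IsCycle ∧ Even c.length ∧
      c.length ≤ 2 * k) :
    ∀ (u v : V) (p q : G.Walk u v), p.IsPath → q.IsPath →
      p.length = k → q.length = k → p = q := by
  classical
  intro u v p q hp hq hpk hqk
  by_contra hpq
  set D := p.edges.toFinset ∆ q.edges.toFinset
  have hDG : (D : Set (Sym2 V)) ⊆ G.edgeSet := fun e he => by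
    rcases mem_union.1 (symmDiff_subset_union he) with h | h <;>
      exact Walk.edges_subset_edgeSet _ (List.mem_toFinset.1 h)
  have hDne : D.Nonempty := symmDiff_nonempty.2 fun h => hpq <|
    hp.eq_of_edges_subset hq fun e he => List.mem_toFinset.1 (h ▸ List.mem_toFinset.2 he)
  have hDeven : IsEvenEdgeSet D := hp.isTrail.isEvenEdgeSet_edges_toFinset_symmDiff hq.isTrail
  have hpcard : #p.edges.toFinset = k := hpk ▸ hp.isTrail.card_edges_toFinset
  have hqcard : #q.edges.toFinset = k := hqk ▸ hq.isTrail.card_edges_toFinset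
  have hDcard : #D ≤ 2 * k := by
    have : #D ≤ #p.edges.toFinset + #q.edges.toFinset :=
      (card_le_card symmDiff_subset_union).trans (card_union_le _ _)
    omega
  have hDpar : Even #D := (even_card_symmDiff_iff _ _).2 (by rw [hpcard, hqcard])
  obtain ⟨w, c, hc, hcD⟩ := hDeven.exists_isCycle hDne hDG
  have hcle : c.length ≤ #D := hc.isTrail.card_edges_toFinset ▸ card_le_card hcD
  have hclong : k < c.length := not_le.1 fun h => hshort ⟨w, c, hc, h⟩
  have hcodd : ¬ Even c.length := fun h => heven ⟨w, c, hc, h, hcle.trans hDcard⟩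
  have hclt : c.length < #D := hcle.lt_of_ne fun h => hcodd (h ▸ hDpar)
  obtain ⟨w', c', hc', hc'le⟩ := hDeven.exists_isCycle_length_le_card_sub hDG hc hcD hclt
  exact hshort ⟨w', c', hc', by omega⟩

/-- Let `k ≥ 2` and let `G` be a graph containing no cycle of length at most `k` and no
even cycle of length at most `2k`.  Then for every pair of vertices `u`, `v` there is
at most one path of length `k` from `u` to `v` in `G`. -/
theorem unique_path_of_length_k {V : Type*} (G : SimpleGraph V) (k : ℕ) (hk : 2 ≤ k)
    (hshort : ¬ ∃ (v : V) (c : G.Walk v v), c.IsCycle ∧ c.length ≤ k)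
    (heven : ¬ ∃ (v : V) (c : G.Walk v v), c.IsCycle ∧ Even c.length ∧
      c.length ≤ 2 * k) :
    ∀ (u v : V) (p q : G.Walk u v), p.IsPath → q.IsPath →
      p.length = k → q.length = k → p = q :=
  unique_path_of_length_k_general G k hshort heven
end
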